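/- Let $\varphi \in \mathcal{S}(\mathbb{R}^n)$ with $\mathrm{supp}\,\varphi \subset [-3/4,3/4]^n$, and let $\alpha \in \mathbb{R}$. Then there is a constant $C>0$ such that for every $k\in\mathbb{Z}^n\setminus\{0\}$, every multi-index $\gamma$ with $|\gamma|\le [n/2]+1$, and every $\xi\neq 0$, we have $|\xi|^{|\gamma|}\,|\partial_\xi^\gamma\big(|k|^\alpha |\xi+k|^{-\alpha}\varphi(\xi)\big)| \le C$. -/

import Mathlib

open MeasureTheory Real SchwartzMap
open scoped ENNReal NNReal

noncomputable section

/-- Euclidean space `ℝⁿ`. -/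
abbrev E (n : ℕ) := EuclideanSpace ℝ (Fin n)

/-- The Fourier transform `f̂(ξ) = ∫ e^{-i ξ·x} f(x) dx`. -/
def ft (n : ℕ) (f : E n → ℂ) (ξ : E n) : ℂ :=
  ∫ x : E n, Complex.exp (-(Complex.I * ((inner ℝ x ξ : ℝ) : ℂ))) * f x

/-- The inverse Fourier transform `(2π)^{-n} ∫ e^{i x·ξ} f(ξ) dξ`. -/
def ftInv (n : ℕ) (f : E n → ℂ) (x : E n) : ℂ :=
  (((2 * Real.pi) ^ n)⁻¹ : ℝ) • ∫ ξ : E n, Complex.exp (Complex.I * ((inner ℝ x ξ : ℝ) : ℂ)) * f ξ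

/-- The fractional integral operator `I_α f = 𝓕⁻¹[|ξ|^{-α} 𝓕 f]`. -/
def Ifrac (n : ℕ) (α : ℝ) (f : E n → ℂ) : E n → ℂ :=
  ftInv n (fun ξ => ((‖ξ‖ ^ (-α) : ℝ) : ℂ) * ft n f ξ)

/-- `I_{α,β} = I_α + I_β`. -/
def Iab (n : ℕ) (α β : ℝ) (f : E n → ℂ) : E n → ℂ :=
  fun x => Ifrac n α f x + Ifrac n β f x

/-- The Gaussian window `φ(t) = e^{-|t|²/2}`. -/
def gauss (n : ℕ) : E n → ℂ := fun t => ((Real.exp (-(‖t‖ ^ 2) / 2) : ℝ) : ℂ)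

/-- The short-time Fourier transform `V_w f (x,ξ) = ∫ f(t) conj(e^{iξ·t} w(t-x)) dt`. -/
def stft (n : ℕ) (w f : E n → ℂ) (x ξ : E n) : ℂ :=
  ∫ t : E n, f t * (starRingEnd ℂ) (Complex.exp (Complex.I * ((inner ℝ ξ t : ℝ) : ℂ)) * w (t - x))

/-- The modulation space norm with window `w`. -/
def MnormW (n : ℕ) (w : E n → ℂ) (p q : ℝ) (f : E n → ℂ) : ℝ≥0∞ :=
  (∫⁻ ξ : E n, (∫⁻ x : E n, ((‖stft n w f x ξ‖₊ : ℝ≥0∞)) ^ p) ^ (q / p)) ^ (1 / q)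

/-- The modulation space norm `‖f‖_{M^{p,q}}` (with Gaussian window). -/
def Mnorm (n : ℕ) (p q : ℝ) (f : E n → ℂ) : ℝ≥0∞ := MnormW n (gauss n) p q f

/-- The lattice point `k ∈ ℤⁿ ⊂ ℝⁿ`. -/
def latt (n : ℕ) (k : Fin n → ℤ) : E n := (WithLp.equiv 2 (Fin n → ℝ)).symm fun i => (k i : ℝ)

/-- The Fourier multiplier operator `m(D) f = 𝓕⁻¹[m 𝓕 f]`. -/
def fmul (n : ℕ) (m : E n → ℂ) (f : E n → ℂ) : E n → ℂ :=
  ftInv n fun ξ => m ξ * ft n f ξ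

/-- The modulation `M_k f(x) = e^{i k·x} f(x)`. -/
def modk (n : ℕ) (k : Fin n → ℤ) (f : E n → ℂ) : E n → ℂ :=
  fun x => Complex.exp (Complex.I * ((inner ℝ (latt n k) x : ℝ) : ℂ)) * f x

/-- The frequency-localization operator `φ(D-k) f = 𝓕⁻¹[φ(·-k) 𝓕 f]`. -/
def phiDk (n : ℕ) (φ : E n → ℝ) (k : Fin n → ℤ) (f : E n → ℂ) : E n → ℂ :=
  fmul n (fun ξ => ((φ (ξ - latt n k) : ℝ) : ℂ)) f

/-- The symbol `m_k^α(ξ) = |k|^α |ξ|^{-α} φ(ξ-k)`. -/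
def mka (n : ℕ) (α : ℝ) (φ : E n → ℝ) (k : Fin n → ℤ) (ξ : E n) : ℂ :=
  ((‖latt n k‖ ^ α * ‖ξ‖ ^ (-α) * φ (ξ - latt n k) : ℝ) : ℂ)

/-!
On `tsupport φ` every coordinate of `ξ` has absolute value at most `3/4`, so for `k ∈ ℤⁿ ∖ {0}`
both `|ξ + k|` and `|k|` are at least `1/4` while `|ξ| ≤ √n`; hence `|k| / |ξ + k|` stays in a
fixed interval `[ρ⁻¹, ρ]`. As `|·|^{-α}` is homogeneous of degree `-α`, its `i`-th derivative at
`z ≠ 0` is `O(|z|^{-α-i})`, so the derivatives of `η ↦ |k|^α |η + k|^{-α}` are bounded on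
`tsupport φ` uniformly in `k`. Leibniz' rule bounds the derivatives of the product with `φ` there,
and outside `tsupport φ` they vanish.
-/

section Homogeneous

variable {V F : Type*} [NormedAddCommGroup V] [NormedSpace ℝ V]
  [NormedAddCommGroup F] [NormedSpace ℝ F]

theorem norm_iteratedFDeriv_le_of_homogeneous {f : V → F} {p : ℝ}
    (hf : ∀ c : ℝ, 0 < c → ∀ x, f (c • x) = c ^ p • f x) {i : ℕ} {y : V} (hy : y ≠ 0)
    (hfy : ContDiffAt ℝ i f (‖y‖⁻¹ • y)) :
    ‖iteratedFDeriv ℝ i f y‖ ≤ ‖y‖ ^ (p - i) * ‖iteratedFDeriv ℝ i f (‖y‖⁻¹ • y)‖ := by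
  set c := ‖y‖
  have hc : 0 < c := norm_pos_iff.2 hy
  let e : V ≃L[ℝ] V := ContinuousLinearEquiv.smulLeft (Units.mk0 c⁻¹ (inv_ne_zero hc.ne'))
  have he : ∀ x, e x = c⁻¹ • x := fun x => rfl
  have hfe : f = c ^ p • (f ∘ e) := funext fun x => by
    simp only [Pi.smul_apply, Function.comp_apply, he, ← hf c hc, smul_inv_smul₀ hc.ne']
  have hcomp : iteratedFDeriv ℝ i (f ∘ e) y =
      (iteratedFDeriv ℝ i f (e y)).compContinuousLinearMap fun _ => (e : V →L[ℝ] V) := by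
    simp only [← iteratedFDerivWithin_univ]
    exact e.iteratedFDerivWithin_comp_right f uniqueDiffOn_univ (Set.mem_univ _) i
  have hnorm_e : ‖(e : V →L[ℝ] V)‖ ≤ c⁻¹ :=
    ContinuousLinearMap.opNorm_le_bound _ (by positivity) fun x => by
      simp [he, norm_smul, abs_of_pos hc]
  calc ‖iteratedFDeriv ℝ i f y‖
      = c ^ p * ‖(iteratedFDeriv ℝ i f (e y)).compContinuousLinearMap
          fun _ => (e : V →L[ℝ] V)‖ := by
        have hfe_y : ContDiffAt ℝ i (f ∘ e) y := hfy.comp y e.contDiff.contDiffAt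
        conv_lhs => rw [hfe]
        rw [iteratedFDeriv_const_smul_apply hfe_y, hcomp,
          norm_smul, Real.norm_of_nonneg (by positivity)]
    _ ≤ c ^ p * (‖iteratedFDeriv ℝ i f (e y)‖ * ∏ _j : Fin i, c⁻¹) := by
        gcongr
        exact (ContinuousMultilinearMap.norm_compContinuousLinearMap_le _ _).trans
          (by gcongr)
    _ = c ^ (p - i) * ‖iteratedFDeriv ℝ i f (c⁻¹ • y)‖ := by
        rw [Real.rpow_sub hc, Real.rpow_natCast, Finset.prod_const, Finset.card_univ,
          Fintype.card_fin, inv_pow, he]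
        ring

end Homogeneous

theorem norm_iteratedFDeriv_mul_le_of_forall_le {𝕜 E A : Type*} [NontriviallyNormedField 𝕜]
    [NormedAddCommGroup E] [NormedSpace 𝕜 E] [NormedRing A] [NormedAlgebra 𝕜 A]
    {f g : E → A} {s : Set E} (hs : IsOpen s) {x : E} (hx : x ∈ s) {m : ℕ}
    (hf : ContDiffOn 𝕜 m f s) (hg : ContDiffOn 𝕜 m g s) {a b : ℕ → ℝ}
    (ha : ∀ i ≤ m, ‖iteratedFDeriv 𝕜 i f x‖ ≤ a i)
    (hb : ∀ j ≤ m, ‖iteratedFDeriv 𝕜 j g x‖ ≤ b j) :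
    ‖iteratedFDeriv 𝕜 m (fun y => f y * g y) x‖ ≤
      ∑ i ∈ Finset.range (m + 1), (m.choose i : ℝ) * a i * b (m - i) := by
  have hLeibniz := norm_iteratedFDerivWithin_mul_le hf hg hs.uniqueDiffOn hx le_rfl
  simp only [iteratedFDerivWithin_of_isOpen _ hs hx] at hLeibniz
  refine hLeibniz.trans (Finset.sum_le_sum fun i hi => ?_)
  have him : i ≤ m := Nat.lt_succ_iff.1 (Finset.mem_range.1 hi)
  have ha0 : 0 ≤ a i := (norm_nonneg _).trans (ha i him)
  gcongr
  exacts [ha i him, hb _ (m.sub_le i)]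

section NormRpow

variable {V : Type*} [NormedAddCommGroup V] [InnerProductSpace ℝ V]

theorem contDiffAt_norm_rpow (p : ℝ) {n : WithTop ℕ∞} {x : V} (hx : x ≠ 0) :
    ContDiffAt ℝ n (fun y : V => ‖y‖ ^ p) x :=
  (contDiffAt_norm ℝ hx).rpow_const_of_ne (norm_ne_zero_iff.2 hx)

variable [FiniteDimensional ℝ V]

theorem exists_norm_iteratedFDeriv_norm_rpow_le (p : ℝ) (i : ℕ) :
    ∃ B, 0 ≤ B ∧ ∀ y : V, y ≠ 0 →
      ‖iteratedFDeriv ℝ i (fun x : V => ‖x‖ ^ p) y‖ ≤ B * ‖y‖ ^ (p - i) := by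
  have hcont : ContinuousOn (iteratedFDeriv ℝ i fun x : V => ‖x‖ ^ p) (Metric.sphere 0 1) :=
    fun u hu => ((contDiffAt_norm_rpow p (ne_zero_of_mem_unit_sphere ⟨u, hu⟩)
      ).continuousAt_iteratedFDeriv le_rfl).continuousWithinAt
  obtain ⟨B, hB⟩ := (isCompact_sphere (0 : V) 1).exists_bound_of_continuousOn hcont
  refine ⟨max B 0, le_max_right _ _, fun y hy => ?_⟩
  have hunit : ‖y‖⁻¹ • y ∈ Metric.sphere (0 : V) 1 := by
    simp [norm_smul, inv_mul_cancel₀ (norm_ne_zero_iff.2 hy)]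
  have hhom : ∀ c : ℝ, 0 < c → ∀ x : V, ‖c • x‖ ^ p = c ^ p • ‖x‖ ^ p := fun c hc x => by
    rw [norm_smul, Real.norm_of_nonneg hc.le, Real.mul_rpow hc.le (norm_nonneg x), smul_eq_mul]
  calc ‖iteratedFDeriv ℝ i (fun x : V => ‖x‖ ^ p) y‖
      ≤ ‖y‖ ^ (p - i) * ‖iteratedFDeriv ℝ i (fun x : V => ‖x‖ ^ p) (‖y‖⁻¹ • y)‖ :=
        norm_iteratedFDeriv_le_of_homogeneous hhom hy
          (contDiffAt_norm_rpow p (ne_zero_of_mem_unit_sphere ⟨_, hunit⟩))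
    _ ≤ ‖y‖ ^ (p - i) * max B 0 := by gcongr; exact (hB _ hunit).trans (le_max_left _ _)
    _ = max B 0 * ‖y‖ ^ (p - i) := mul_comm _ _

end NormRpow

theorem rpow_le_rpow_abs_of_le_of_inv_le {x ρ : ℝ} (α : ℝ) (hx : 0 < x) (hxρ : x ≤ ρ)
    (hxρ' : x⁻¹ ≤ ρ) : x ^ α ≤ ρ ^ |α| := by
  rcases le_or_gt 0 α with hα | hα
  · rw [abs_of_nonneg hα]
    exact Real.rpow_le_rpow hx.le hxρ hα
  · rw [abs_of_neg hα, ← neg_neg α, Real.rpow_neg hx.le, ← Real.inv_rpow hx.le, neg_neg]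
    exact Real.rpow_le_rpow (inv_nonneg.2 hx.le) hxρ' (neg_nonneg.2 hα.le)

theorem div_le_one_add_div_of_le_add {a b R δ : ℝ} (hδ : 0 < δ) (hδb : δ ≤ b) (hR : 0 ≤ R)
    (hab : a ≤ b + R) : a / b ≤ 1 + R / δ := by
  have hb : 0 < b := hδ.trans_le hδb
  rw [div_le_iff₀ hb, add_mul, one_mul]
  calc a ≤ b + R := hab
    _ ≤ b + R / δ * b := by
        gcongr
        rw [div_mul_eq_mul_div, le_div_iff₀ hδ]
        exact mul_le_mul_of_nonneg_left hδb hR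

section TranslatedSymbol

variable {V : Type*} [NormedAddCommGroup V] [InnerProductSpace ℝ V] [FiniteDimensional ℝ V]

theorem exists_norm_iteratedFDeriv_translated_rpow_le (α : ℝ) (i : ℕ) {R δ : ℝ} (hδ : 0 < δ) :
    ∃ A, ∀ x y : V, ‖x‖ ≤ R → δ ≤ ‖y‖ → δ ≤ ‖x + y‖ →
      ‖iteratedFDeriv ℝ i (fun η => ‖y‖ ^ α * ‖η + y‖ ^ (-α)) x‖ ≤ A := by
  obtain ⟨B, hB0, hB⟩ := exists_norm_iteratedFDeriv_norm_rpow_le (V := V) (-α) i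
  refine ⟨B * ((1 + R / δ) ^ |α| * δ ^ (-(i : ℝ))), fun x y hx hy hxy => ?_⟩
  have hR : 0 ≤ R := (norm_nonneg x).trans hx
  have hy0 : 0 < ‖y‖ := hδ.trans_le hy
  have hxy0 : 0 < ‖x + y‖ := hδ.trans_le hxy
  have hne : x + y ≠ 0 := norm_pos_iff.1 hxy0
  have hderiv : iteratedFDeriv ℝ i (fun η => ‖y‖ ^ α * ‖η + y‖ ^ (-α)) x =
      ‖y‖ ^ α • iteratedFDeriv ℝ i (fun z : V => ‖z‖ ^ (-α)) (x + y) := by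
    rw [← iteratedFDeriv_comp_add_right]
    exact iteratedFDeriv_const_smul_apply' (a := ‖y‖ ^ α)
      ((contDiffAt_norm_rpow (-α) hne).comp x (contDiffAt_id.add contDiffAt_const))
  have hratio : (‖y‖ / ‖x + y‖) ^ α ≤ (1 + R / δ) ^ |α| := by
    refine rpow_le_rpow_abs_of_le_of_inv_le α (by positivity)
      (div_le_one_add_div_of_le_add hδ hxy hR ?_) ?_
    · calc ‖y‖ = ‖x + y - x‖ := by rw [add_sub_cancel_left]
        _ ≤ ‖x + y‖ + R := (norm_sub_le _ _).trans (by gcongr)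
    · rw [inv_div]
      exact div_le_one_add_div_of_le_add hδ hy hR
        ((norm_add_le x y).trans (by rw [add_comm]; gcongr))
  calc ‖iteratedFDeriv ℝ i (fun η => ‖y‖ ^ α * ‖η + y‖ ^ (-α)) x‖
      = ‖y‖ ^ α * ‖iteratedFDeriv ℝ i (fun z : V => ‖z‖ ^ (-α)) (x + y)‖ := by
        rw [hderiv, norm_smul, Real.norm_of_nonneg (by positivity)]
    _ ≤ ‖y‖ ^ α * (B * ‖x + y‖ ^ (-α - i)) := by gcongr; exact hB _ hne
    _ = B * ((‖y‖ / ‖x + y‖) ^ α * ‖x + y‖ ^ (-(i : ℝ))) := by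
        rw [Real.div_rpow hy0.le hxy0.le, sub_eq_add_neg, Real.rpow_add hxy0,
          Real.rpow_neg hxy0.le α]
        ring
    _ ≤ B * ((1 + R / δ) ^ |α| * δ ^ (-(i : ℝ))) := by
        have hpow := Real.rpow_le_rpow_of_nonpos hδ hxy (neg_nonpos.2 (i.cast_nonneg (α := ℝ)))
        gcongr

theorem exists_norm_iteratedFDeriv_translated_rpow_mul_le (α : ℝ) (m : ℕ) {φ : V → ℝ}
    (hφ : ContDiff ℝ m φ) {R δ : ℝ} (hδ : 0 < δ) :
    ∃ C, ∀ x y : V, ‖x‖ ≤ R → δ ≤ ‖y‖ → δ ≤ ‖x + y‖ →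
      ‖iteratedFDeriv ℝ m (fun η => ‖y‖ ^ α * ‖η + y‖ ^ (-α) * φ η) x‖ ≤ C := by
  choose A hA using fun i => exists_norm_iteratedFDeriv_translated_rpow_le (V := V) α i (R := R) hδ
  have hφ_bdd : ∀ j ≤ m, ∃ Φ, ∀ x ∈ Metric.closedBall (0 : V) R, ‖iteratedFDeriv ℝ j φ x‖ ≤ Φ :=
    fun j hj => (isCompact_closedBall 0 R).exists_bound_of_continuousOn
      (hφ.continuous_iteratedFDeriv (by exact_mod_cast hj)).continuousOn
  choose! Φ hΦ using hφ_bdd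
  refine ⟨∑ i ∈ Finset.range (m + 1), (m.choose i : ℝ) * A i * Φ (m - i),
    fun x y hx hy hxy => ?_⟩
  have hsymbol : ContDiffOn ℝ m (fun η => ‖y‖ ^ α * ‖η + y‖ ^ (-α)) {η | η + y ≠ 0} :=
    fun η hη => (contDiffAt_const.mul ((contDiffAt_norm_rpow (-α) hη).comp η
      (contDiffAt_id.add contDiffAt_const))).contDiffWithinAt
  exact norm_iteratedFDeriv_mul_le_of_forall_le
    (isOpen_ne_fun (continuous_id.add continuous_const) continuous_const)
    (norm_pos_iff.1 (hδ.trans_le hxy)) hsymbol hφ.contDiffOn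
    (fun i _ => hA i x y hx hy hxy) (fun j hj => hΦ j hj x (mem_closedBall_zero_iff.2 hx))

theorem exists_norm_pow_mul_norm_iteratedFDeriv_translated_rpow_mul_le (α : ℝ) (m : ℕ)
    {φ : V → ℝ} (hφ : ContDiff ℝ m φ) {R δ : ℝ} (hδ : 0 < δ)
    (hφR : ∀ x ∈ tsupport φ, ‖x‖ ≤ R) :
    ∃ C, ∀ y : V, δ ≤ ‖y‖ → (∀ x ∈ tsupport φ, δ ≤ ‖x + y‖) → ∀ x : V,
      ‖x‖ ^ m * ‖iteratedFDeriv ℝ m (fun η => ‖y‖ ^ α * ‖η + y‖ ^ (-α) * φ η) x‖ ≤ C := by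
  obtain ⟨C, hC⟩ := exists_norm_iteratedFDeriv_translated_rpow_mul_le α m hφ (R := R) hδ
  refine ⟨max (R ^ m * C) 0, fun y hy hφy x => ?_⟩
  by_cases hx : x ∈ tsupport φ
  · have hxR := hφR x hx
    exact le_max_of_le_left (mul_le_mul (pow_le_pow_left₀ (norm_nonneg x) hxR m)
      (hC x y hxR hy (hφy x hx)) (norm_nonneg _) (pow_nonneg ((norm_nonneg x).trans hxR) m))
  · have hzero : iteratedFDeriv ℝ m (fun η => ‖y‖ ^ α * ‖η + y‖ ^ (-α) * φ η) x = 0 :=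
      Function.notMem_support.1 fun h =>
        hx (tsupport_mul_subset_right (support_iteratedFDeriv_subset m h))
    rw [hzero, norm_zero, mul_zero]
    exact le_max_right _ _

end TranslatedSymbol

theorem EuclideanSpace.norm_le_sqrt_card_of_forall_abs_le_one {ι : Type*} [Fintype ι]
    {x : EuclideanSpace ℝ ι} (hx : ∀ i, |x i| ≤ 1) : ‖x‖ ≤ √(Fintype.card ι) := by
  rw [EuclideanSpace.norm_eq]
  gcongr
  calc ∑ i, ‖x i‖ ^ 2 ≤ ∑ _i : ι, (1 : ℝ) :=
        Finset.sum_le_sum fun i _ => pow_le_one₀ (norm_nonneg _) (hx i)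
    _ = Fintype.card ι := by simp

theorem one_fourth_le_norm_add_latt {n : ℕ} {ξ : E n} (hξ : ∀ i, |ξ i| ≤ 3 / 4)
    {k : Fin n → ℤ} (hk : k ≠ 0) : 1 / 4 ≤ ‖ξ + latt n k‖ := by
  obtain ⟨i, hi⟩ := Function.ne_iff.1 hk
  have hki : (1 : ℝ) ≤ |(k i : ℝ)| := by exact_mod_cast Int.one_le_abs hi
  calc (1 : ℝ) / 4 ≤ |(k i : ℝ)| - |ξ i| := by linarith [hξ i]
    _ ≤ |ξ i + k i| := by
        simpa [add_comm] using abs_sub_abs_le_abs_sub (k i : ℝ) (-ξ i)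
    _ ≤ ‖ξ + latt n k‖ := PiLp.norm_apply_le (ξ + latt n k) i

theorem translated_symbol_mikhlin_estimate_general
    (n : ℕ) (α : ℝ)
    (φ : SchwartzMap (E n) ℝ)
    (hφs : ∀ ξ : E n, φ ξ ≠ 0 → ∀ i, |ξ i| ≤ 3 / 4) :
    ∃ C : ℝ, 0 < C ∧ ∀ k : Fin n → ℤ, k ≠ 0 → ∀ m : ℕ, m ≤ n / 2 + 1 →
      ∀ v : Fin m → Fin n, ∀ ξ : E n, ξ ≠ 0 →
        ‖ξ‖ ^ m *
          ‖iteratedFDeriv ℝ m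
              (fun η : E n => ‖latt n k‖ ^ α * ‖η + latt n k‖ ^ (-α) * φ η) ξ
              (fun j => EuclideanSpace.single (v j) (1 : ℝ))‖ ≤ C := by
  have hcube : ∀ ξ ∈ tsupport φ, ∀ i, |ξ i| ≤ 3 / 4 := by
    refine closure_minimal (t := {ξ : E n | ∀ i, |ξ i| ≤ 3 / 4}) (fun ξ hξ => hφs ξ hξ) ?_
    simp only [Set.ofPred_forall]
    exact isClosed_iInter fun i => isClosed_le (by fun_prop) continuous_const
  have hbound : ∀ m : ℕ, ∃ C, ∀ k : Fin n → ℤ, k ≠ 0 → ∀ ξ : E n, ‖ξ‖ ^ m *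
      ‖iteratedFDeriv ℝ m (fun η => ‖latt n k‖ ^ α * ‖η + latt n k‖ ^ (-α) * φ η) ξ‖ ≤ C := by
    intro m
    obtain ⟨C, hC⟩ := exists_norm_pow_mul_norm_iteratedFDeriv_translated_rpow_mul_le α m
      (φ.smooth m) (δ := 1 / 4) (by norm_num) fun ξ hξ => by
        simpa using EuclideanSpace.norm_le_sqrt_card_of_forall_abs_le_one
          fun i => (hcube ξ hξ i).trans (by norm_num)
    refine ⟨C, fun k hk => hC _ ?_ fun ξ hξ => one_fourth_le_norm_add_latt (hcube ξ hξ) hk⟩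
    simpa using one_fourth_le_norm_add_latt (ξ := 0) (fun _ => by norm_num) hk
  -- each bound holds for all large `C`, so one `C` serves the finitely many `m ≤ n / 2 + 1`
  obtain ⟨C, hC, hCpos⟩ := (((Set.finite_Iic (n / 2 + 1)).eventually_all.2 fun m _ =>
    let ⟨C₀, hC₀⟩ := hbound m
    Filter.eventually_atTop.2 ⟨C₀, fun C hC k hk ξ => (hC₀ k hk ξ).trans hC⟩).and
    (Filter.eventually_gt_atTop 0)).exists
  refine ⟨C, hCpos, fun k hk m hm v ξ _ => le_trans ?_ (hC m hm k hk ξ)⟩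
  gcongr
  refine (ContinuousMultilinearMap.le_opNorm _ _).trans_eq ?_
  simp

/-- Mikhlin-type estimates for the translated symbols
`ξ ↦ |k|^α |ξ+k|^{-α} φ(ξ)`, uniformly in `k ≠ 0`. -/
theorem translated_symbol_mikhlin_estimate
    (n : ℕ) (hn : 0 < n) (α : ℝ)
    (φ : SchwartzMap (E n) ℝ)
    (hφs : ∀ ξ : E n, φ ξ ≠ 0 → ∀ i, |ξ i| ≤ 3 / 4) :
    ∃ C : ℝ, 0 < C ∧ ∀ k : Fin n → ℤ, k ≠ 0 → ∀ m : ℕ, m ≤ n / 2 + 1 →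
      ∀ v : Fin m → Fin n, ∀ ξ : E n, ξ ≠ 0 →
        ‖ξ‖ ^ m *
          ‖iteratedFDeriv ℝ m
              (fun η : E n => ‖latt n k‖ ^ α * ‖η + latt n k‖ ^ (-α) * φ η) ξ
              (fun j => EuclideanSpace.single (v j) (1 : ℝ))‖ ≤ C :=
  translated_symbol_mikhlin_estimate_general n α φ hφs
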